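/- arXiv:2406.09851 — 2 statements merged into one kernel-verified Lean document; each statement's English description precedes it below -/
import Mathlib

section
/- Let m, n ≥ 1 and let A be the m×n real matrix whose only possibly nonzero entries are in its first row and first column, with zero (1,1)-entry: A_{1,j} = a_{j−1} for 2 ≤ j ≤ n, A_{i,1} = b_{i−1} for 2 ≤ i ≤ m, A_{1,1} = 0, and A_{i,j} = 0 for i, j ≥ 2. Then ‖A‖ = ( max( Σ_{j=1}^{n−1} a_j² , Σ_{i=1}^{m−1} b_i² ) )^{1/2}, where ‖·‖ is the ℓ²→ℓ² operator norm. -/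
/-!
Writing `v = (v₀, v')`, one has `‖A v‖² = (a ⬝ v')² + ‖b‖² v₀²`. Cauchy–Schwarz bounds this by
`max (‖a‖², ‖b‖²) ‖v‖²`, and the test vectors `(0, a)` and `e₀` attain `‖a‖²` and `‖b‖²`.
-/

open MeasureTheory ProbabilityTheory Filter

/-- The ℓ²→ℓ² operator norm (largest singular value) of a real matrix. -/
noncomputable def l2OpNorm {m n : Type*} [Fintype m] [Fintype n] [DecidableEq n]
    (A : Matrix m n ℝ) : ℝ :=
  ‖LinearMap.toContinuousLinearMap (Matrix.toEuclideanLin A)‖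

namespace ContinuousLinearMap

variable {𝕜 E F : Type*} [NontriviallyNormedField 𝕜] [SeminormedAddCommGroup E]
  [SeminormedAddCommGroup F] [NormedSpace 𝕜 E] [NormedSpace 𝕜 F]

theorem opNorm_sq_le_of_norm_apply_sq_le (f : E →L[𝕜] F) {M : ℝ} (hM : 0 ≤ M)
    (h : ∀ v, ‖f v‖ ^ 2 ≤ M * ‖v‖ ^ 2) : ‖f‖ ^ 2 ≤ M := by
  have hbound : ‖f‖ ≤ √M := f.opNorm_le_bound (Real.sqrt_nonneg M) fun v => by
    rw [← Real.sqrt_sq (norm_nonneg (f v)), ← Real.sqrt_sq (norm_nonneg v), ← Real.sqrt_mul hM]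
    exact Real.sqrt_le_sqrt (h v)
  simpa [Real.sq_sqrt hM] using pow_le_pow_left₀ (norm_nonneg f) hbound 2

theorem le_opNorm_sq_of_mul_norm_sq_le (f : E →L[𝕜] F) {M : ℝ} {v : E} (hv : 0 < ‖v‖)
    (h : M * ‖v‖ ^ 2 ≤ ‖f v‖ ^ 2) : M ≤ ‖f‖ ^ 2 := by
  have hfv : ‖f v‖ ^ 2 ≤ ‖f‖ ^ 2 * ‖v‖ ^ 2 := by
    rw [← mul_pow]
    exact pow_le_pow_left₀ (norm_nonneg _) (f.le_opNorm v) 2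
  exact le_of_mul_le_mul_right (h.trans hfv) (by positivity)

end ContinuousLinearMap

theorem EuclideanSpace.norm_sq_eq_sq_zero_add_sum_succ {n : ℕ}
    (v : EuclideanSpace ℝ (Fin (n + 1))) :
    ‖v‖ ^ 2 = v 0 ^ 2 + ∑ j : Fin n, v j.succ ^ 2 := by
  rw [EuclideanSpace.real_norm_sq_eq, Fin.sum_univ_succ]

-- Row `0` holds the outgoing weights `a`, column `0` the incoming weights `b`.
def starMatrix {α : Type*} [Zero α] {m n : ℕ} (a : Fin n → α) (b : Fin m → α) :
    Matrix (Fin (m + 1)) (Fin (n + 1)) α :=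
  Matrix.of (Fin.cons (Fin.cons 0 a) fun i => Fin.cons (b i) 0)

section starMatrix

open Matrix

variable {m n : ℕ}

theorem starMatrix_eq_of_apply {α : Type*} [Zero α] {a : Fin n → α} {b : Fin m → α}
    {A : Matrix (Fin (m + 1)) (Fin (n + 1)) α} (h00 : A 0 0 = 0)
    (hrow : ∀ j : Fin n, A 0 j.succ = a j) (hcol : ∀ i : Fin m, A i.succ 0 = b i)
    (hzero : ∀ (i : Fin m) (j : Fin n), A i.succ j.succ = 0) : starMatrix a b = A := by
  ext i j
  cases i using Fin.cases <;> cases j using Fin.cases <;> simp [starMatrix, *]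

variable {α : Type*} [NonUnitalNonAssocSemiring α] (a : Fin n → α) (b : Fin m → α)
  (v : Fin (n + 1) → α)

theorem starMatrix_mulVec_zero : (starMatrix a b *ᵥ v) 0 = ∑ j, a j * v j.succ := by
  simp [starMatrix, mulVec, dotProduct, Fin.sum_univ_succ]

theorem starMatrix_mulVec_succ (i : Fin m) : (starMatrix a b *ᵥ v) i.succ = b i * v 0 := by
  simp [starMatrix, mulVec, dotProduct, Fin.sum_univ_succ]

end starMatrix

section starMatrixNorm

open Matrix

variable {m n : ℕ} (a : Fin n → ℝ) (b : Fin m → ℝ)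

theorem norm_sq_toEuclideanLin_starMatrix (v : EuclideanSpace ℝ (Fin (n + 1))) :
    ‖toEuclideanLin (starMatrix a b) v‖ ^ 2 =
      (∑ j, a j * v j.succ) ^ 2 + (∑ i, b i ^ 2) * v 0 ^ 2 := by
  rw [EuclideanSpace.norm_sq_eq_sq_zero_add_sum_succ, Finset.sum_mul]
  simp only [toLpLin_apply, PiLp.toLp_apply, starMatrix_mulVec_zero,
    starMatrix_mulVec_succ, mul_pow]

theorem norm_sq_toEuclideanLin_starMatrix_le (v : EuclideanSpace ℝ (Fin (n + 1))) :
    ‖toEuclideanLin (starMatrix a b) v‖ ^ 2 ≤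
      max (∑ j, a j ^ 2) (∑ i, b i ^ 2) * ‖v‖ ^ 2 :=
  calc ‖toEuclideanLin (starMatrix a b) v‖ ^ 2
      = (∑ j, a j * v j.succ) ^ 2 + (∑ i, b i ^ 2) * v 0 ^ 2 :=
        norm_sq_toEuclideanLin_starMatrix a b v
    _ ≤ (∑ j, a j ^ 2) * (∑ j : Fin n, v j.succ ^ 2) + (∑ i, b i ^ 2) * v 0 ^ 2 := by
        gcongr
        exact Finset.sum_mul_sq_le_sq_mul_sq _ _ _
    _ ≤ max (∑ j, a j ^ 2) (∑ i, b i ^ 2) * (∑ j : Fin n, v j.succ ^ 2) +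
          max (∑ j, a j ^ 2) (∑ i, b i ^ 2) * v 0 ^ 2 := by
        gcongr
        exacts [le_max_left _ _, le_max_right _ _]
    _ = max (∑ j, a j ^ 2) (∑ i, b i ^ 2) * ‖v‖ ^ 2 := by
        rw [EuclideanSpace.norm_sq_eq_sq_zero_add_sum_succ]
        ring

theorem l2OpNorm_starMatrix :
    l2OpNorm (starMatrix a b) = √(max (∑ j, a j ^ 2) (∑ i, b i ^ 2)) := by
  set f := LinearMap.toContinuousLinearMap (toEuclideanLin (starMatrix a b))
  have hS : 0 ≤ ∑ j, a j ^ 2 := by positivity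
  have hf : ∀ v, ‖f v‖ ^ 2 = (∑ j, a j * v j.succ) ^ 2 + (∑ i, b i ^ 2) * v 0 ^ 2 :=
    norm_sq_toEuclideanLin_starMatrix a b
  have hout : ∑ j, a j ^ 2 ≤ ‖f‖ ^ 2 := by
    rcases hS.eq_or_lt with hS0 | hSpos
    · rw [← hS0]
      positivity
    set v : EuclideanSpace ℝ (Fin (n + 1)) := WithLp.toLp 2 (Fin.cons 0 a)
    have hv : ‖v‖ ^ 2 = ∑ j, a j ^ 2 := by
      simp [v, EuclideanSpace.norm_sq_eq_sq_zero_add_sum_succ]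
    have hv_pos : 0 < ‖v‖ := (norm_nonneg v).lt_of_ne' (sq_pos_iff.1 (hv ▸ hSpos))
    refine f.le_opNorm_sq_of_mul_norm_sq_le hv_pos ?_
    rw [hf, hv]
    simp [v, sq]
  have hin : ∑ i, b i ^ 2 ≤ ‖f‖ ^ 2 := by
    refine f.le_opNorm_sq_of_mul_norm_sq_le (v := EuclideanSpace.single 0 1) (by simp) ?_
    rw [hf]
    simp
  rw [l2OpNorm, eq_comm, Real.sqrt_eq_iff_eq_sq (le_max_of_le_left hS) (norm_nonneg _)]
  exact le_antisymm (max_le hout hin)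
    (f.opNorm_sq_le_of_norm_apply_sq_le (le_max_of_le_left hS)
      (norm_sq_toEuclideanLin_starMatrix_le a b))

end starMatrixNorm

/-- The operator norm of the adjacency matrix of a weighted directed star. -/
theorem stmt_10 (m n : ℕ) (a : Fin n → ℝ) (b : Fin m → ℝ)
    (A : Matrix (Fin (m + 1)) (Fin (n + 1)) ℝ)
    (h00 : A 0 0 = 0)
    (hrow : ∀ j : Fin n, A 0 j.succ = a j)
    (hcol : ∀ i : Fin m, A i.succ 0 = b i)
    (hzero : ∀ (i : Fin m) (j : Fin n), A i.succ j.succ = 0) :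
    l2OpNorm A = Real.sqrt (max (∑ j, a j ^ 2) (∑ i, b i ^ 2)) := by
  rw [← starMatrix_eq_of_apply h00 hrow hcol hzero]
  exact l2OpNorm_starMatrix a b
end

section
/- Fix constants a, d, δ > 0. For each n ≥ 3 let B_n be a random variable with the binomial distribution with ⌈a·log n/log log n⌉ trials and success probability d/n (assuming n > d). Then limsup_{n→∞} log ℙ(B_n ≥ δ) / log n ≤ −δ. -/
open MeasureTheory ProbabilityTheory Filter Topology Real

/-!
Put `k = ⌈δ⌉₊`, so that `{δ ≤ Bₙ} = {k ≤ Bₙ}`, and write `M = O(log n)` for the number of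
trials and `p = d / n`. Since `(M choose j) pʲ ≤ (Mp)ʲ` and `Mp → 0`, the tail is dominated by a
geometric series, `ℙ(Bₙ ≥ k) ≤ 2 (Mp)ᵏ`, while Bernoulli's inequality gives
`ℙ(Bₙ = k) ≥ pᵏ (1 - Mp) ≥ pᵏ / 2`. Both bounds are `n⁻ᵏ` up to polylogarithmic factors, hence
`log ℙ(Bₙ ≥ δ) / log n → -⌈δ⌉₊ ≤ -δ`. The lower bound cannot be skipped: the `limsup` of a real
sequence that is not bounded below is a junk value.
-/

section Binomial

lemma choose_mul_pow_mul_one_sub_pow_le {p : ℝ} (hp₀ : 0 ≤ p) (hp₁ : p ≤ 1) (M j : ℕ) :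
    (M.choose j : ℝ) * p ^ j * (1 - p) ^ (M - j) ≤ (M * p) ^ j :=
  calc (M.choose j : ℝ) * p ^ j * (1 - p) ^ (M - j) ≤ (M : ℝ) ^ j * p ^ j * 1 := by
        gcongr
        · exact_mod_cast M.choose_le_pow j
        · exact pow_le_one₀ (by linarith) (by linarith)
    _ = (M * p) ^ j := by rw [mul_one, mul_pow]

lemma pow_mul_one_sub_mul_le_choose_mul {p : ℝ} (hp₀ : 0 ≤ p) (hp₁ : p ≤ 1) {M k : ℕ}
    (hk : k ≤ M) :
    p ^ k * (1 - M * p) ≤ (M.choose k : ℝ) * p ^ k * (1 - p) ^ (M - k) := by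
  have hchoose : (1 : ℝ) ≤ M.choose k := by exact_mod_cast Nat.choose_pos hk
  have hbernoulli : 1 - M * p ≤ (1 - p) ^ M := by
    simpa [sub_eq_add_neg] using one_add_mul_le_pow (a := -p) (by linarith) M
  calc p ^ k * (1 - M * p) ≤ 1 * p ^ k * (1 - p) ^ (M - k) := by
        rw [one_mul]
        gcongr
        exact hbernoulli.trans (pow_le_pow_of_le_one (by linarith) (by linarith) (M.sub_le k))
    _ ≤ (M.choose k : ℝ) * p ^ k * (1 - p) ^ (M - k) := by
        gcongr

variable {Ω : Type*} [MeasurableSpace Ω] {μ : Measure Ω} [IsFiniteMeasure μ] {X : Ω → ℕ}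

lemma toReal_measure_le_le_div_of_le_pow {q : ℝ} (hq₀ : 0 ≤ q) (hq₁ : q < 1)
    (hX : ∀ j, (μ {ω | X ω = j}).toReal ≤ q ^ j) (k : ℕ) :
    (μ {ω | k ≤ X ω}).toReal ≤ q ^ k / (1 - q) := by
  have hsum : HasSum (fun j ↦ q ^ (k + j)) (q ^ k / (1 - q)) := by
    simpa [pow_add, div_eq_mul_inv] using (hasSum_geometric_of_lt_one hq₀ hq₁).mul_left (q ^ k)
  have hcover : {ω | k ≤ X ω} ⊆ ⋃ j, {ω | X ω = k + j} := fun ω hω ↦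
    Set.mem_iUnion.mpr ⟨X ω - k, by simp [Nat.add_sub_cancel' hω.out]⟩
  refine ENNReal.toReal_le_of_le_ofReal (div_nonneg (by positivity) (by linarith)) ?_
  calc μ {ω | k ≤ X ω} ≤ ∑' j, μ {ω | X ω = k + j} :=
        (measure_mono hcover).trans (measure_iUnion_le _)
    _ ≤ ∑' j, ENNReal.ofReal (q ^ (k + j)) := ENNReal.tsum_le_tsum fun j ↦
        ENNReal.le_ofReal_iff_toReal_le (measure_ne_top μ _) (by positivity) |>.mpr (hX _)
    _ = ENNReal.ofReal (q ^ k / (1 - q)) := by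
        rw [← ENNReal.ofReal_tsum_of_nonneg (fun j ↦ by positivity) hsum.summable, hsum.tsum_eq]

lemma toReal_measure_le_le_two_mul {M : ℕ} {p : ℝ}
    (hX : ∀ j, (μ {ω | X ω = j}).toReal = M.choose j * p ^ j * (1 - p) ^ (M - j))
    (hp₀ : 0 ≤ p) (hp₁ : p ≤ 1) (hMp : M * p ≤ 1 / 2) (k : ℕ) :
    (μ {ω | k ≤ X ω}).toReal ≤ 2 * (M * p) ^ k := by
  have hq₀ : 0 ≤ (M : ℝ) * p := by positivity
  calc (μ {ω | k ≤ X ω}).toReal ≤ (M * p) ^ k / (1 - M * p) :=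
        toReal_measure_le_le_div_of_le_pow hq₀ (by linarith) (fun j ↦
          (hX j).trans_le (choose_mul_pow_mul_one_sub_pow_le hp₀ hp₁ M j)) k
    _ ≤ 2 * (M * p) ^ k := by
        rw [div_le_iff₀ (by linarith)]
        nlinarith [pow_nonneg hq₀ k]

lemma pow_div_two_le_toReal_measure_le {M : ℕ} {p : ℝ}
    (hX : ∀ j, (μ {ω | X ω = j}).toReal = M.choose j * p ^ j * (1 - p) ^ (M - j))
    (hp₀ : 0 ≤ p) (hp₁ : p ≤ 1) (hMp : M * p ≤ 1 / 2)
    {k : ℕ} (hk : k ≤ M) :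
    p ^ k / 2 ≤ (μ {ω | k ≤ X ω}).toReal :=
  calc p ^ k / 2 ≤ p ^ k * (1 - M * p) := by nlinarith [pow_nonneg hp₀ k]
    _ ≤ (μ {ω | X ω = k}).toReal := (hX k).symm ▸ pow_mul_one_sub_mul_le_choose_mul hp₀ hp₁ hk
    _ ≤ (μ {ω | k ≤ X ω}).toReal :=
        ENNReal.toReal_mono (measure_ne_top μ _) (measure_mono fun ω hω ↦ hω.out.ge)

lemma toReal_measure_le_mem_Icc_of_le_mul_log {M k : ℕ} {c d x : ℝ} (hd : 0 < d)
    (hdx : d < x)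
    (hX : ∀ j, (μ {ω | X ω = j}).toReal = M.choose j * (d / x) ^ j * (1 - d / x) ^ (M - j))
    (hk : k ≤ M) (hM : (M : ℝ) ≤ c * log x) (hsmall : c * d * log x / x ≤ 1 / 2) :
    d ^ k / 2 / x ^ k ≤ (μ {ω | k ≤ X ω}).toReal ∧
      (μ {ω | k ≤ X ω}).toReal ≤ 2 * (c * d) ^ k * log x ^ k / x ^ k := by
  have hx : 0 < x := hd.trans hdx
  have hp₀ : 0 ≤ d / x := by positivity
  have hp₁ : d / x ≤ 1 := (div_le_one hx).mpr hdx.le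
  have hMp : M * (d / x) ≤ c * d * log x / x := by
    rw [mul_div_assoc', mul_right_comm c]
    gcongr
  constructor
  · calc d ^ k / 2 / x ^ k = (d / x) ^ k / 2 := by ring
      _ ≤ _ := pow_div_two_le_toReal_measure_le hX hp₀ hp₁ (hMp.trans hsmall) hk
  · calc (μ {ω | k ≤ X ω}).toReal ≤ 2 * (M * (d / x)) ^ k :=
          toReal_measure_le_le_two_mul hX hp₀ hp₁ (hMp.trans hsmall) k
      _ ≤ 2 * (c * d * log x / x) ^ k := by gcongr
      _ = 2 * (c * d) ^ k * log x ^ k / x ^ k := by ring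

end Binomial

lemma tendsto_log_div_pow_div_log {c : ℕ → ℝ} (k : ℕ) (hc₀ : ∀ᶠ n in atTop, 0 < c n)
    (hc : Tendsto (fun n : ℕ ↦ log (c n) / log n) atTop (𝓝 0)) :
    Tendsto (fun n : ℕ ↦ log (c n / n ^ k) / log n) atTop (𝓝 (-k)) := by
  have hlog : ∀ᶠ n : ℕ in atTop, 0 < log n :=
    (tendsto_log_atTop.comp tendsto_natCast_atTop_atTop).eventually_gt_atTop 0
  have hlim : Tendsto (fun n : ℕ ↦ log (c n) / log n - k) atTop (𝓝 (-k)) := by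
    simpa using hc.sub_const (k : ℝ)
  refine hlim.congr' ?_
  filter_upwards [hc₀, hlog, eventually_gt_atTop 0] with n hcn hn hn₀
  rw [log_div hcn.ne' (by positivity), log_pow]
  field_simp

lemma tendsto_log_div_log_of_le_of_le {P lo hi : ℕ → ℝ} (k : ℕ)
    (hlo : Tendsto (fun n : ℕ ↦ log (lo n) / log n) atTop (𝓝 0))
    (hhi : Tendsto (fun n : ℕ ↦ log (hi n) / log n) atTop (𝓝 0))
    (hlo₀ : ∀ᶠ n in atTop, 0 < lo n)
    (hP : ∀ᶠ n : ℕ in atTop, lo n / n ^ k ≤ P n ∧ P n ≤ hi n / n ^ k) :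
    Tendsto (fun n : ℕ ↦ log (P n) / log n) atTop (𝓝 (-k)) := by
  have hlog : ∀ᶠ n : ℕ in atTop, 0 < log n :=
    (tendsto_log_atTop.comp tendsto_natCast_atTop_atTop).eventually_gt_atTop 0
  have hbounds : ∀ᶠ n : ℕ in atTop, 0 < lo n / n ^ k ∧ 0 < log n ∧
      lo n / n ^ k ≤ P n ∧ P n ≤ hi n / n ^ k := by
    filter_upwards [hlo₀, hlog, hP, eventually_gt_atTop 0] with n h₀ hn hP hn₀
    exact ⟨by positivity, hn, hP⟩
  have hhi₀ : ∀ᶠ n in atTop, 0 < hi n := by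
    filter_upwards [hbounds, hlo₀, eventually_gt_atTop 0] with n h hlon hn₀
    have : lo n ≤ hi n :=
      (div_le_div_iff_of_pos_right (by positivity)).mp (h.2.2.1.trans h.2.2.2)
    linarith
  refine tendsto_of_tendsto_of_tendsto_of_le_of_le' (tendsto_log_div_pow_div_log k hlo₀ hlo)
    (tendsto_log_div_pow_div_log k hhi₀ hhi) ?_ ?_
  · filter_upwards [hbounds] with n h
    obtain ⟨h₀, hn, hl, -⟩ := h
    gcongr
  · filter_upwards [hbounds] with n h
    obtain ⟨h₀, hn, hl, hu⟩ := h
    gcongr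
    linarith

lemma tendsto_log_mul_log_pow_div_log {c : ℝ} (hc : 0 < c) (k : ℕ) :
    Tendsto (fun n : ℕ ↦ log (c * log n ^ k) / log n) atTop (𝓝 0) := by
  have hlog : Tendsto (fun n : ℕ ↦ log n) atTop atTop :=
    tendsto_log_atTop.comp tendsto_natCast_atTop_atTop
  have hloglog : Tendsto (fun n : ℕ ↦ log (log n) / log n) atTop (𝓝 0) :=
    isLittleO_log_id_atTop.tendsto_div_nhds_zero.comp hlog
  have hlim : Tendsto (fun n : ℕ ↦ log c / log n + k * (log (log n) / log n)) atTop (𝓝 0) := by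
    simpa using (tendsto_const_nhds.div_atTop hlog).add (hloglog.const_mul (k : ℝ))
  refine hlim.congr' ?_
  filter_upwards [hlog.eventually_gt_atTop 0] with n hn
  rw [log_mul hc.ne' (by positivity), log_pow]
  ring

noncomputable def numTrials (a : ℝ) (n : ℕ) : ℕ := ⌈a * log n / log (log n)⌉₊

lemma eventually_numTrials_le {a : ℝ} (ha : 0 ≤ a) :
    ∀ᶠ n : ℕ in atTop, (numTrials a n : ℝ) ≤ (a + 1) * log n := by
  have hlog : Tendsto (fun n : ℕ ↦ log n) atTop atTop :=
    tendsto_log_atTop.comp tendsto_natCast_atTop_atTop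
  filter_upwards [hlog.eventually_ge_atTop 1, (tendsto_log_atTop.comp hlog).eventually_ge_atTop 1]
    with n hn hlogn
  have hx : a * log n / log (log n) ≤ a * log n := div_le_self (by positivity) hlogn
  calc (numTrials a n : ℝ) ≤ a * log n / log (log n) + 1 :=
        (Nat.ceil_lt_add_one (by positivity)).le
    _ ≤ (a + 1) * log n := by linarith

lemma tendsto_numTrials {a : ℝ} (ha : 0 < a) : Tendsto (numTrials a) atTop atTop := by
  have hlog : Tendsto (fun n : ℕ ↦ log n) atTop atTop :=
    tendsto_log_atTop.comp tendsto_natCast_atTop_atTop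
  have hdivlog : Tendsto (fun x : ℝ ↦ x / log x) atTop atTop := by
    have h : Tendsto (fun x : ℝ ↦ log x / x) atTop (𝓝[>] 0) :=
      tendsto_nhdsWithin_iff.mpr ⟨isLittleO_log_id_atTop.tendsto_div_nhds_zero,
        (eventually_gt_atTop 1).mono fun x hx ↦ div_pos (log_pos hx) (by linarith)⟩
    exact h.inv_tendsto_nhdsGT_zero.congr fun x ↦ by simp [inv_div]
  refine tendsto_nat_ceil_atTop.comp ?_
  simpa [mul_div_assoc] using (hdivlog.comp hlog).const_mul_atTop ha

lemma tendsto_mul_log_div_natCast (c : ℝ) :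
    Tendsto (fun n : ℕ ↦ c * log n / n) atTop (𝓝 0) := by
  simpa [mul_div_assoc] using
    (isLittleO_log_id_atTop.tendsto_div_nhds_zero.comp tendsto_natCast_atTop_atTop).const_mul c

theorem stmt_15_general (a d δ : ℝ) (ha : 0 < a) (hd : 0 < d)
    {Ω : Type*} [MeasurableSpace Ω] (μ : Measure Ω) [IsProbabilityMeasure μ]
    (B : ℕ → Ω → ℕ)
    (hB : ∀ n : ℕ, 3 ≤ n → d < n → ∀ k : ℕ,
      (μ {ω | B n ω = k}).toReal =
        (Nat.choose ⌈a * Real.log n / Real.log (Real.log n)⌉₊ k : ℝ) * (d / n) ^ k *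
          (1 - d / n) ^ (⌈a * Real.log n / Real.log (Real.log n)⌉₊ - k)) :
    Filter.limsup (fun n : ℕ =>
        Real.log ((μ {ω | δ ≤ (B n ω : ℝ)}).toReal) / Real.log n) atTop ≤ -δ := by
  set k := ⌈δ⌉₊
  have hset : ∀ n, {ω | δ ≤ (B n ω : ℝ)} = {ω | k ≤ B n ω} := fun n ↦ by
    ext ω
    simp [k, Nat.ceil_le]
  have hlim : Tendsto (fun n : ℕ ↦ log ((μ {ω | k ≤ B n ω}).toReal) / log n) atTop
      (𝓝 (-k)) := by
    have hlo : Tendsto (fun n : ℕ ↦ log (d ^ k / 2) / log n) atTop (𝓝 0) :=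
      tendsto_const_nhds.div_atTop (tendsto_log_atTop.comp tendsto_natCast_atTop_atTop)
    refine tendsto_log_div_log_of_le_of_le k hlo
      (tendsto_log_mul_log_pow_div_log (c := 2 * ((a + 1) * d) ^ k) (by positivity) k)
      (.of_forall fun _ ↦ by positivity) ?_
    filter_upwards [eventually_ge_atTop 3, tendsto_natCast_atTop_atTop.eventually_gt_atTop d,
      (tendsto_numTrials ha).eventually_ge_atTop k, eventually_numTrials_le ha.le,
      (tendsto_mul_log_div_natCast ((a + 1) * d)).eventually (ge_mem_nhds one_half_pos)]
      with n h3 hdn hk hM hsmall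
    exact toReal_measure_le_mem_Icc_of_le_mul_log hd hdn (hB n h3 hdn) hk hM hsmall
  simp only [hset]
  rw [hlim.limsup_eq]
  exact neg_le_neg (Nat.le_ceil δ)

/-- Upper tail estimate for a binomial random variable with
`⌈a·log n/log log n⌉` trials and success probability `d/n`. -/
theorem stmt_15 (a d δ : ℝ) (ha : 0 < a) (hd : 0 < d) (hδ : 0 < δ)
    {Ω : Type*} [MeasurableSpace Ω] (μ : Measure Ω) [IsProbabilityMeasure μ]
    (B : ℕ → Ω → ℕ)
    (hB : ∀ n : ℕ, 3 ≤ n → d < n → ∀ k : ℕ,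
      (μ {ω | B n ω = k}).toReal =
        (Nat.choose ⌈a * Real.log n / Real.log (Real.log n)⌉₊ k : ℝ) * (d / n) ^ k *
          (1 - d / n) ^ (⌈a * Real.log n / Real.log (Real.log n)⌉₊ - k)) :
    Filter.limsup (fun n : ℕ =>
        Real.log ((μ {ω | δ ≤ (B n ω : ℝ)}).toReal) / Real.log n) atTop ≤ -δ :=
  stmt_15_general a d δ ha hd μ B hB
end
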